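/- arXiv:math-ph/0607029 — 3 statements merged into one kernel-verified Lean document; each statement's English description precedes it below -/
import Mathlib

section
/- Let H be a Jacobi matrix, let z ∈ ℂ with z ∉ σ(H), set Δ(z) = dist(z, σ(H)), ‖t‖_∞ = sup_n t_n and C₂ = 1/(4‖t‖_∞). Then for all n, m ∈ ℤ: |G^z(n,m)| ≤ (2/Δ(z)) · exp(−arcsinh(C₂ Δ(z)) · |n−m|). -/
open MeasureTheory Complex

noncomputable section

abbrev Ltwo := lp (fun _ : ℤ => ℂ) 2

/-- The delta function at site `n` in `ℓ²(ℤ)`. -/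
def delta (n : ℤ) : Ltwo := lp.single 2 n 1

/-- A Jacobi matrix with hopping terms in `[c,C]` and potential bounded by `C`:
a bounded self-adjoint operator on `ℓ²(ℤ)` acting by
`(Hψ)(n) = t_{n+1} ψ(n+1) + v_n ψ(n) + t_n ψ(n-1)`. -/
structure JacobiMatrix (c C : ℝ) where
  t : ℤ → ℝ
  v : ℤ → ℝ
  t_lb : ∀ n, c ≤ t n
  t_ub : ∀ n, t n ≤ C
  v_bd : ∀ n, |v n| ≤ C
  H : Ltwo →L[ℂ] Ltwo
  selfadj : IsSelfAdjoint H
  apply_eq : ∀ (ψ : Ltwo) (n : ℤ),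
    (H ψ : ∀ _ : ℤ, ℂ) n
      = (t (n+1) : ℂ) * (ψ : ∀ _ : ℤ, ℂ) (n+1) + (v n : ℂ) * (ψ : ∀ _ : ℤ, ℂ) n
        + (t n : ℂ) * (ψ : ∀ _ : ℤ, ℂ) (n-1)

/-- The Green function `G^z(n,m) = ⟨δ_n, (H-z)⁻¹ δ_m⟩`. -/
def green {c C : ℝ} (J : JacobiMatrix c C) (z : ℂ) (n m : ℤ) : ℂ :=
  inner (𝕜 := ℂ) (delta n) (Ring.inverse (J.H - z • 1) (delta m))

/-!
Combes–Thomas argument. Conjugating `H` by multiplication with the weight `e^{θ j}` (truncated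
far away so that it stays bounded and invertible) only multiplies the hopping terms by
`e^{±θ} - 1`, so `W H W⁻¹ - H` has norm at most `2 ‖t‖_∞ sinh |θ|`, which is `≤ Δ/2` for
`sinh |θ| = Δ / (4 ‖t‖_∞)`. Since `‖(H - z)⁻¹‖ ≤ 1/Δ` by the functional calculus, a Neumann series
gives `‖(W (H - z) W⁻¹)⁻¹‖ ≤ 2/Δ`, and the `(n, m)` entry of
`(H - z)⁻¹ = W⁻¹ (W (H - z) W⁻¹)⁻¹ W` carries the factor `e^{θ (m - n)}`.
-/

open scoped Ring

namespace NormedRing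

variable {R : Type*} [NormedRing R] [CompleteSpace R] [NormOneClass R]

theorem norm_inverse_add_le {x : R} (hx : IsUnit x) {y : R} (hy : ‖x⁻¹ʳ‖ * ‖y‖ < 1) :
    ‖(x + y)⁻¹ʳ‖ ≤ ‖x⁻¹ʳ‖ / (1 - ‖x⁻¹ʳ‖ * ‖y‖) := by
  set t := -(x⁻¹ʳ * y)
  have ht_le : ‖t‖ ≤ ‖x⁻¹ʳ‖ * ‖y‖ := (norm_neg _).trans_le (norm_mul_le _ _)
  have ht : ‖t‖ < 1 := ht_le.trans_lt hy
  have hxy : x + y = x * (1 - t) := by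
    rw [sub_neg_eq_add, mul_add, mul_one, Ring.mul_inverse_cancel_left x y hx]
  have h_geom : ‖(1 - t)⁻¹ʳ‖ ≤ (1 - ‖t‖)⁻¹ := by
    have := tsum_geometric_le_of_norm_lt_one t ht
    rw [norm_one, sub_self, zero_add] at this
    rwa [inverse_one_sub t ht]
  calc ‖(x + y)⁻¹ʳ‖ = ‖(1 - t)⁻¹ʳ * x⁻¹ʳ‖ := by rw [hxy, Ring.inverse_mul (.inl hx)]
    _ ≤ (1 - ‖t‖)⁻¹ * ‖x⁻¹ʳ‖ := (norm_mul_le _ _).trans (by gcongr)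
    _ ≤ (1 - ‖x⁻¹ʳ‖ * ‖y‖)⁻¹ * ‖x⁻¹ʳ‖ := by gcongr
    _ = ‖x⁻¹ʳ‖ / (1 - ‖x⁻¹ʳ‖ * ‖y‖) := by rw [inv_mul_eq_div]

end NormedRing

theorem Ring.inverse_units_conj {M₀ : Type*} [MonoidWithZero M₀] (u : M₀ˣ) (x : M₀) :
    (↑u * x * ↑u⁻¹)⁻¹ʳ = ↑u * x⁻¹ʳ * ↑u⁻¹ := by
  rw [Ring.inverse_mul (.inr u⁻¹.isUnit), Ring.inverse_mul (.inl u.isUnit), Ring.inverse_unit,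
    Ring.inverse_unit, inv_inv, mul_assoc]

theorem IsStarNormal.norm_inverse_sub_le {A : Type*} [CStarAlgebra A] (a : A) [IsStarNormal a]
    (z : ℂ) : ‖(a - algebraMap ℂ A z)⁻¹ʳ‖ ≤ (Metric.infDist z (spectrum ℂ a))⁻¹ := by
  by_cases hz : z ∈ spectrum ℂ a
  · rw [Ring.inverse_non_unit _ fun h => spectrum.mem_iff.mp hz (by simpa using h.neg)]
    simpa using Metric.infDist_nonneg
  have hne : ∀ x ∈ spectrum ℂ a, x - z ≠ 0 := fun x hx h => hz (sub_eq_zero.mp h ▸ hx)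
  have hcfc : cfc (fun x => x - z) a = a - algebraMap ℂ A z := by
    rw [cfc_sub _ _, cfc_id' ℂ a, cfc_const z a]
  rw [← hcfc, ← cfc_inv (fun x => x - z) a hne]
  refine norm_cfc_le (inv_nonneg.mpr Metric.infDist_nonneg) fun x hx => ?_
  have hΔ : Metric.infDist z (spectrum ℂ a) ≤ ‖x - z‖ := by
    simpa [dist_eq_norm'] using Metric.infDist_le_dist_of_mem (x := z) hx
  have hpos : 0 < Metric.infDist z (spectrum ℂ a) :=
    ((spectrum.isClosed a).notMem_iff_infDist_pos ⟨x, hx⟩).mp hz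
  rw [norm_inv]
  exact inv_anti₀ hpos hΔ

section WeightedShift

variable (a : ℤ → ℂ) (s : ℤ) {M : ℝ}

theorem sum_norm_mul_shift_rpow_le (hM : ∀ i, ‖a i‖ ≤ M) (ψ : Ltwo) (F : Finset ℤ) :
    ∑ i ∈ F, ‖a i * ψ (i + s)‖ ^ (2 : ℝ) ≤ (M * ‖ψ‖) ^ (2 : ℝ) := by
  have hM0 : 0 ≤ M := (norm_nonneg _).trans (hM 0)
  have hψ : ∑ i ∈ F, ‖ψ (i + s)‖ ^ (2 : ℝ) ≤ ‖ψ‖ ^ (2 : ℝ) := by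
    simpa using lp.sum_rpow_le_norm_rpow (p := 2) (by norm_num) ψ (F.map (addRightEmbedding s))
  calc ∑ i ∈ F, ‖a i * ψ (i + s)‖ ^ (2 : ℝ)
      ≤ ∑ i ∈ F, M ^ (2 : ℝ) * ‖ψ (i + s)‖ ^ (2 : ℝ) := by
        gcongr with i
        rw [← Real.mul_rpow hM0 (norm_nonneg _), norm_mul]
        gcongr
        exact hM i
    _ = M ^ (2 : ℝ) * ∑ i ∈ F, ‖ψ (i + s)‖ ^ (2 : ℝ) := (Finset.mul_sum ..).symm
    _ ≤ M ^ (2 : ℝ) * ‖ψ‖ ^ (2 : ℝ) := by gcongr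
    _ = (M * ‖ψ‖) ^ (2 : ℝ) := (Real.mul_rpow hM0 (norm_nonneg _)).symm

variable (hM : ∀ i, ‖a i‖ ≤ M)

def weightedShift : Ltwo →L[ℂ] Ltwo :=
  LinearMap.mkContinuous
    { toFun := fun ψ => ⟨fun i => a i * ψ (i + s),
        memℓp_gen' fun F => by simpa using sum_norm_mul_shift_rpow_le a s hM ψ F⟩
      map_add' := fun ψ φ => lp.ext <| funext fun i => mul_add _ _ _
      map_smul' := fun c ψ => lp.ext <| funext fun i => mul_left_comm _ _ _ }
    M fun ψ => lp.norm_le_of_forall_sum_le (by norm_num)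
      (mul_nonneg ((norm_nonneg _).trans (hM 0)) (norm_nonneg _))
      fun F => by simpa using sum_norm_mul_shift_rpow_le a s hM ψ F

@[simp]
theorem weightedShift_apply (ψ : Ltwo) (i : ℤ) : weightedShift a s hM ψ i = a i * ψ (i + s) := rfl

theorem norm_weightedShift_le : ‖weightedShift a s hM‖ ≤ M :=
  LinearMap.mkContinuous_norm_le _ ((norm_nonneg _).trans (hM 0)) _

end WeightedShift

theorem inner_delta_left (n : ℤ) (ψ : Ltwo) : inner ℂ (delta n) ψ = ψ n := by
  simp [delta, lp.inner_single_left]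

theorem norm_delta (n : ℤ) : ‖delta n‖ = 1 := by
  simp [delta, lp.norm_single]

instance : Nontrivial Ltwo :=
  nontrivial_of_ne (delta 0) 0 <| norm_ne_zero_iff.mp <| by rw [norm_delta]; exact one_ne_zero

section Weight

variable (w : ℤ → ℂ) (hw0 : ∀ j, w j ≠ 0) {M : ℝ} (hw : ∀ j, ‖w j‖ ≤ M)
  (hw' : ∀ j, ‖(w j)⁻¹‖ ≤ M)

def weightUnit : (Ltwo →L[ℂ] Ltwo)ˣ where
  val := weightedShift w 0 hw
  inv := weightedShift (fun j => (w j)⁻¹) 0 hw'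
  val_inv := ContinuousLinearMap.ext fun ψ => lp.ext <| funext fun j => by simp [hw0 j]
  inv_val := ContinuousLinearMap.ext fun ψ => lp.ext <| funext fun j => by simp [hw0 j]

@[simp]
theorem weightUnit_apply (ψ : Ltwo) (j : ℤ) :
    (weightUnit w hw0 hw hw' : Ltwo →L[ℂ] Ltwo) ψ j = w j * ψ j := by
  simp [weightUnit]

@[simp]
theorem weightUnit_inv_apply (ψ : Ltwo) (j : ℤ) :
    (↑(weightUnit w hw0 hw hw')⁻¹ : Ltwo →L[ℂ] Ltwo) ψ j = (w j)⁻¹ * ψ j := by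
  simp [weightUnit]

theorem weightUnit_delta (m : ℤ) :
    (weightUnit w hw0 hw hw' : Ltwo →L[ℂ] Ltwo) (delta m) = w m • delta m := by
  ext j
  rcases eq_or_ne j m with rfl | hj
  · simp
  · simp [delta, hj]

end Weight

theorem abs_exp_neg_sub_one_add_abs_exp_sub_one (θ : ℝ) :
    |Real.exp (-θ) - 1| + |Real.exp θ - 1| = 2 * |Real.sinh θ| := by
  rw [Real.abs_sinh, Real.sinh_eq]
  rcases le_total 0 θ with h | h
  · rw [abs_of_nonneg h, abs_of_nonpos (by simpa using h), abs_of_nonneg (by simpa using h)]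
    ring
  · rw [abs_of_nonpos h, abs_of_nonneg (by simpa using h), abs_of_nonpos (by simpa using h),
      neg_neg]
    ring

def cutoff (L j : ℤ) : ℤ := max (-L) (min j L)

theorem abs_cutoff_le (L j : ℤ) : |cutoff L j| ≤ |L| := by
  unfold cutoff; grind

theorem cutoff_of_abs_le {L j : ℤ} (h : |j| ≤ L) : cutoff L j = j := by
  unfold cutoff; grind

theorem cutoff_sub_cutoff_add_one (L j : ℤ) :
    cutoff L j - cutoff L (j + 1) = 0 ∨ cutoff L j - cutoff L (j + 1) = -1 := by
  unfold cutoff; omega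

theorem cutoff_sub_cutoff_sub_one (L j : ℤ) :
    cutoff L j - cutoff L (j - 1) = 0 ∨ cutoff L j - cutoff L (j - 1) = 1 := by
  unfold cutoff; omega

section ExpWeight

variable (θ : ℝ) (L : ℤ)

-- Truncated at `±L` so that the weight stays bounded above and below.
def expWeight (j : ℤ) : ℂ := Real.exp (θ * cutoff L j)

theorem expWeight_div_expWeight (j k : ℤ) :
    expWeight θ L j / expWeight θ L k = Real.exp (θ * (cutoff L j - cutoff L k : ℤ)) := by
  rw [expWeight, expWeight, ← Complex.ofReal_div, ← Real.exp_sub, ← mul_sub, Int.cast_sub]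

theorem expWeight_ne_zero (j : ℤ) : expWeight θ L j ≠ 0 :=
  Complex.ofReal_ne_zero.mpr (Real.exp_pos _).ne'

theorem abs_mul_cutoff_le (j : ℤ) : |θ * cutoff L j| ≤ |θ| * |L| := by
  rw [abs_mul, ← Int.cast_abs]
  exact mul_le_mul_of_nonneg_left (by exact_mod_cast abs_cutoff_le L j) (abs_nonneg θ)

theorem norm_expWeight_le (j : ℤ) : ‖expWeight θ L j‖ ≤ Real.exp (|θ| * |L|) := by
  rw [expWeight, Complex.norm_real, Real.norm_of_nonneg (Real.exp_pos _).le, Real.exp_le_exp]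
  exact (le_abs_self _).trans (abs_mul_cutoff_le θ L j)

theorem norm_inv_expWeight_le (j : ℤ) : ‖(expWeight θ L j)⁻¹‖ ≤ Real.exp (|θ| * |L|) := by
  rw [expWeight, norm_inv, Complex.norm_real, Real.norm_of_nonneg (Real.exp_pos _).le,
    ← Real.exp_neg, Real.exp_le_exp]
  exact (neg_le_abs _).trans (abs_mul_cutoff_le θ L j)

theorem norm_expWeight_div_sub_one (j k : ℤ) :
    ‖expWeight θ L j / expWeight θ L k - 1‖
      = |Real.exp (θ * (cutoff L j - cutoff L k : ℤ)) - 1| := by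
  rw [expWeight_div_expWeight, ← Complex.ofReal_one, ← Complex.ofReal_sub, Complex.norm_real,
    Real.norm_eq_abs]

theorem norm_expWeight_div_add_one_sub_one_le (j : ℤ) :
    ‖expWeight θ L j / expWeight θ L (j + 1) - 1‖ ≤ |Real.exp (-θ) - 1| := by
  rw [norm_expWeight_div_sub_one]
  rcases cutoff_sub_cutoff_add_one L j with h | h <;> simp [h]

theorem norm_expWeight_div_sub_one_sub_one_le (j : ℤ) :
    ‖expWeight θ L j / expWeight θ L (j - 1) - 1‖ ≤ |Real.exp θ - 1| := by
  rw [norm_expWeight_div_sub_one]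
  rcases cutoff_sub_cutoff_sub_one L j with h | h <;> simp [h]

theorem norm_expWeight_div_expWeight_of_abs_le {m n : ℤ} (hm : |m| ≤ L) (hn : |n| ≤ L) :
    ‖expWeight θ L m / expWeight θ L n‖ = Real.exp (θ * (m - n)) := by
  rw [expWeight_div_expWeight, Complex.norm_real, Real.norm_of_nonneg (Real.exp_pos _).le,
    cutoff_of_abs_le hm, cutoff_of_abs_le hn, Int.cast_sub]

end ExpWeight

namespace JacobiMatrix

variable {c C : ℝ} (J : JacobiMatrix c C)

section Conj

variable (w : ℤ → ℂ) (hw0 : ∀ j, w j ≠ 0) {M : ℝ} (hw : ∀ j, ‖w j‖ ≤ M)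
  (hw' : ∀ j, ‖(w j)⁻¹‖ ≤ M)

theorem norm_weightUnit_conj_sub_le {T α β : ℝ} (hT : ∀ j, |J.t j| ≤ T)
    (hα : ∀ j, ‖w j / w (j + 1) - 1‖ ≤ α) (hβ : ∀ j, ‖w j / w (j - 1) - 1‖ ≤ β) :
    ‖↑(weightUnit w hw0 hw hw') * J.H * ↑(weightUnit w hw0 hw hw')⁻¹ - J.H‖ ≤ T * (α + β) := by
  have hT0 : 0 ≤ T := (abs_nonneg _).trans (hT 0)
  set a : ℤ → ℂ := fun j => J.t (j + 1) * (w j / w (j + 1) - 1)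
  set b : ℤ → ℂ := fun j => J.t j * (w j / w (j - 1) - 1)
  have ha : ∀ j, ‖a j‖ ≤ T * α := fun j => by
    rw [norm_mul, Complex.norm_real, Real.norm_eq_abs]
    exact mul_le_mul (hT _) (hα j) (norm_nonneg _) hT0
  have hb : ∀ j, ‖b j‖ ≤ T * β := fun j => by
    rw [norm_mul, Complex.norm_real, Real.norm_eq_abs]
    exact mul_le_mul (hT _) (hβ j) (norm_nonneg _) hT0
  have hconj : ↑(weightUnit w hw0 hw hw') * J.H * ↑(weightUnit w hw0 hw hw')⁻¹ - J.H
      = weightedShift a 1 ha + weightedShift b (-1) hb := by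
    ext ψ j
    simp only [sub_apply, add_apply, mul_apply_eq_comp, lp.coeFn_sub, lp.coeFn_add,
      Pi.sub_apply, Pi.add_apply, weightUnit_apply, weightUnit_inv_apply, weightedShift_apply,
      J.apply_eq, a, b, ← sub_eq_add_neg]
    field_simp [hw0 j, hw0 (j + 1), hw0 (j - 1)]
    ring
  calc _ = ‖weightedShift a 1 ha + weightedShift b (-1) hb‖ := by rw [hconj]
    _ ≤ T * α + T * β := (norm_add_le _ _).trans
        (add_le_add (norm_weightedShift_le _ _ _) (norm_weightedShift_le _ _ _))
    _ = T * (α + β) := (mul_add _ _ _).symm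

theorem green_eq_weightUnit_conj (z : ℂ) (n m : ℤ) :
    green J z n m = (w n)⁻¹ * w m * inner ℂ (delta n)
      ((↑(weightUnit w hw0 hw hw') * (J.H - z • 1) * ↑(weightUnit w hw0 hw hw')⁻¹)⁻¹ʳ
        (delta m)) := by
  set u := weightUnit w hw0 hw hw'
  have hres : (J.H - z • 1)⁻¹ʳ = ↑u⁻¹ * (↑u * (J.H - z • 1) * ↑u⁻¹)⁻¹ʳ * ↑u := by
    rw [Ring.inverse_units_conj]
    simp [mul_assoc]
  rw [green, hres]
  simp only [mul_apply_eq_comp, u, weightUnit_delta, map_smul, inner_delta_left,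
    weightUnit_inv_apply, lp.coeFn_smul, Pi.smul_apply, smul_eq_mul]
  ring

end Conj

theorem norm_green_le_of_weight {z : ℂ} (hz : z ∉ spectrum ℂ J.H) (w : ℤ → ℂ)
    (hw0 : ∀ j, w j ≠ 0) {M : ℝ} (hw : ∀ j, ‖w j‖ ≤ M) (hw' : ∀ j, ‖(w j)⁻¹‖ ≤ M) {T α β : ℝ}
    (hT : ∀ j, |J.t j| ≤ T) (hα : ∀ j, ‖w j / w (j + 1) - 1‖ ≤ α)
    (hβ : ∀ j, ‖w j / w (j - 1) - 1‖ ≤ β)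
    (hαβ : T * (α + β) ≤ Metric.infDist z (spectrum ℂ J.H) / 2) (n m : ℤ) :
    ‖green J z n m‖ ≤ 2 / Metric.infDist z (spectrum ℂ J.H) * ‖w m / w n‖ := by
  set Δ := Metric.infDist z (spectrum ℂ J.H)
  set u := weightUnit w hw0 hw hw'
  set X := J.H - z • 1
  have hΔ : 0 < Δ :=
    ((spectrum.isClosed J.H).notMem_iff_infDist_pos (spectrum.nonempty J.H)).mp hz
  have hX : IsUnit X := by
    simpa [Algebra.algebraMap_eq_smul_one] using (spectrum.notMem_iff.mp hz).neg
  have hR : ‖X⁻¹ʳ‖ ≤ Δ⁻¹ := by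
    have := J.selfadj.isStarNormal
    simpa [Algebra.algebraMap_eq_smul_one] using IsStarNormal.norm_inverse_sub_le J.H z
  have hE := J.norm_weightUnit_conj_sub_le w hw0 hw hw' hT hα hβ
  have hconj : ↑u * X * ↑u⁻¹ = X + (↑u * J.H * ↑u⁻¹ - J.H) := by
    simp only [X, mul_sub, sub_mul, mul_smul_comm, smul_mul_assoc, mul_one, Units.mul_inv]
    abel
  have hq : ‖X⁻¹ʳ‖ * ‖↑u * J.H * ↑u⁻¹ - J.H‖ ≤ 1 / 2 :=
    calc _ ≤ Δ⁻¹ * (Δ / 2) := by gcongr; linarith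
      _ = 1 / 2 := by field_simp
  have hY : ‖(↑u * X * ↑u⁻¹)⁻¹ʳ‖ ≤ 2 / Δ :=
    calc _ ≤ ‖X⁻¹ʳ‖ / (1 - ‖X⁻¹ʳ‖ * ‖↑u * J.H * ↑u⁻¹ - J.H‖) := by
          rw [hconj]; exact NormedRing.norm_inverse_add_le hX (by linarith)
      _ ≤ Δ⁻¹ / (1 - 1 / 2) := by gcongr
      _ = 2 / Δ := by ring
  have hinner : ‖inner ℂ (delta n) ((↑u * X * ↑u⁻¹)⁻¹ʳ (delta m))‖ ≤ 2 / Δ :=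
    calc _ ≤ ‖delta n‖ * ‖(↑u * X * ↑u⁻¹)⁻¹ʳ (delta m)‖ := norm_inner_le_norm _ _
      _ ≤ ‖(↑u * X * ↑u⁻¹)⁻¹ʳ‖ := by
          simpa [norm_delta] using ((↑u * X * ↑u⁻¹)⁻¹ʳ).le_opNorm (delta m)
      _ ≤ 2 / Δ := hY
  rw [J.green_eq_weightUnit_conj w hw0 hw hw', norm_mul, inv_mul_eq_div, mul_comm]
  gcongr

theorem norm_green_le_exp_mul {z : ℂ} (hz : z ∉ spectrum ℂ J.H) {T : ℝ} (hT : ∀ j, |J.t j| ≤ T)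
    {θ : ℝ} (hθ : 4 * T * |Real.sinh θ| ≤ Metric.infDist z (spectrum ℂ J.H)) (n m : ℤ) :
    ‖green J z n m‖ ≤ 2 / Metric.infDist z (spectrum ℂ J.H) * Real.exp (θ * (m - n)) := by
  set L := max |n| |m|
  have hαβ : T * (|Real.exp (-θ) - 1| + |Real.exp θ - 1|)
      ≤ Metric.infDist z (spectrum ℂ J.H) / 2 := by
    rw [abs_exp_neg_sub_one_add_abs_exp_sub_one]
    linarith
  have h := J.norm_green_le_of_weight hz (expWeight θ L) (expWeight_ne_zero θ L)
    (norm_expWeight_le θ L) (norm_inv_expWeight_le θ L) hT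
    (norm_expWeight_div_add_one_sub_one_le θ L) (norm_expWeight_div_sub_one_sub_one_le θ L)
    hαβ n m
  rwa [norm_expWeight_div_expWeight_of_abs_le θ L (le_max_right _ _) (le_max_left _ _)] at h

end JacobiMatrix

theorem stmt1_general (c C : ℝ) (hc : 0 < c) (J : JacobiMatrix c C)
    (z : ℂ) (hz : z ∉ spectrum ℂ J.H) (n m : ℤ) :
    ‖green J z n m‖ ≤
      2 / Metric.infDist z (spectrum ℂ J.H) *
        Real.exp (- Real.arsinh ((4 * ⨆ k, J.t k)⁻¹ * Metric.infDist z (spectrum ℂ J.H))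
          * |(n : ℝ) - (m : ℝ)|) := by
  set Δ := Metric.infDist z (spectrum ℂ J.H)
  set T := ⨆ k, J.t k
  set η := Real.arsinh ((4 * T)⁻¹ * Δ)
  have ht_le : ∀ j, J.t j ≤ T := le_ciSup ⟨C, Set.forall_mem_range.mpr J.t_ub⟩
  have hT : ∀ j, |J.t j| ≤ T := fun j => by
    rw [abs_of_pos (hc.trans_le (J.t_lb j))]; exact ht_le j
  have hT0 : 0 < T := hc.trans_le ((J.t_lb 0).trans (ht_le 0))
  have hη : 0 ≤ η :=
    Real.arsinh_nonneg_iff.mpr (mul_nonneg (by positivity) Metric.infDist_nonneg)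
  obtain ⟨θ, hθ, hθnm⟩ : ∃ θ : ℝ, |θ| = η ∧ θ * (m - n) = -η * |(n : ℝ) - m| := by
    rcases le_total m n with h | h
    · refine ⟨η, abs_of_nonneg hη, ?_⟩
      rw [abs_of_nonneg (by simpa using h)]; ring
    · refine ⟨-η, by rw [abs_neg, abs_of_nonneg hη], ?_⟩
      rw [abs_of_nonpos (by simpa using h)]; ring
  have hsinh : 4 * T * |Real.sinh θ| ≤ Δ := by
    rw [Real.abs_sinh, hθ, Real.sinh_arsinh, ← mul_assoc, mul_inv_cancel₀ (by positivity),
      one_mul]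
  simpa [hθnm] using J.norm_green_le_exp_mul hz hT hsinh n m

/-- the Combes–Thomas estimate for Jacobi matrices. -/
theorem stmt1 (c C : ℝ) (hc : 0 < c) (hcC : c ≤ C) (J : JacobiMatrix c C)
    (z : ℂ) (hz : z ∉ spectrum ℂ J.H) (n m : ℤ) :
    ‖green J z n m‖ ≤
      2 / Metric.infDist z (spectrum ℂ J.H) *
        Real.exp (- Real.arsinh ((4 * ⨆ k, J.t k)⁻¹ * Metric.infDist z (spectrum ℂ J.H))
          * |(n : ℝ) - (m : ℝ)|) :=
  stmt1_general c C hc J z hz n m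
end
end

section
/- Let B₁, …, B_K be independent random matrices on a probability space (Ω, P), each taking values in SL(2,ℂ), and suppose p₀ ∈ (0,1) and r ≥ 1 are such that P(‖B_j‖² ≥ r) ≥ p₀ for each j = 1, …, K. Set T_j = B_j ⋯ B₁ for 1 ≤ j ≤ K and T₀ = 1. Then P( max_{0 ≤ j ≤ K} ‖T_j‖² ≥ r^{1/2} ) ≥ 1 − (1 − p₀)^K. -/
open MeasureTheory ProbabilityTheory

noncomputable section

/-- Matrices are measurable entrywise. -/
instance : MeasurableSpace (Matrix (Fin 2) (Fin 2) ℂ) :=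
  (inferInstance : MeasurableSpace (Fin 2 → Fin 2 → ℂ))

/-- The operator norm of a 2×2 complex matrix (acting on the Euclidean space `ℂ²`). -/
def opNorm2 (A : Matrix (Fin 2) (Fin 2) ℂ) : ℝ :=
  ‖LinearMap.toContinuousLinearMap (Matrix.toEuclideanLin A)‖

/-- The ordered partial products `T_j = B_{j-1} ⋯ B_0` (so `T_0 = 1`). -/
def prodUpTo {Ω : Type*} (B : ℕ → Ω → Matrix (Fin 2) (Fin 2) ℂ) (ω : Ω) :
    ℕ → Matrix (Fin 2) (Fin 2) ℂ
  | 0 => 1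
  | j + 1 => B j ω * prodUpTo B ω j

/-!
A block `B_j` with `‖B_j‖² ≥ r` is the quotient `T_{j+1} T_j⁻¹` of two consecutive partial
products, and `‖T_j⁻¹‖ = ‖T_j‖` in `SL(2,ℂ)`, so `r ≤ ‖T_{j+1}‖² ‖T_j‖²` and one of the two
factors is at least `√r`. Hence the event in question contains the union of the independent
events `{‖B_j‖² ≥ r}`, whose complement has probability at most `(1 - p₀)^K`.
-/

namespace Matrix

open scoped Matrix.Norms.L2Operator

section L2OpNorm

open WithLp

variable {𝕜 m n : Type*} [RCLike 𝕜] [Fintype m] [Fintype n] [DecidableEq n]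

lemma l2_opNorm_map_star_le (A : Matrix m n 𝕜) : ‖A.map star‖ ≤ ‖A‖ := by
  refine ContinuousLinearMap.opNorm_le_bound _ (norm_nonneg A) fun x => ?_
  set y : EuclideanSpace 𝕜 n := toLp 2 (star (ofLp x))
  have hy : ‖y‖ = ‖x‖ := by simp [EuclideanSpace.norm_eq, y]
  have hmap : A.map star *ᵥ ofLp x = star (A *ᵥ ofLp y) := by
    ext i
    simp [y, mulVec, dotProduct]
  calc ‖toLp 2 (A.map star *ᵥ ofLp x)‖
      = ‖(EuclideanSpace.equiv m 𝕜).symm (A *ᵥ ofLp y)‖ := by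
        rw [hmap]; simp [EuclideanSpace.norm_eq]
    _ ≤ ‖A‖ * ‖y‖ := l2_opNorm_mulVec A y
    _ = ‖A‖ * ‖x‖ := by rw [hy]

lemma l2_opNorm_transpose [DecidableEq m] (A : Matrix m n 𝕜) : ‖Aᵀ‖ = ‖A‖ := by
  have hconj : Aᵀ = (A.map star)ᴴ := by ext; simp
  have hinvol : (A.map star).map star = A := by ext; simp
  rw [hconj, l2_opNorm_conjTranspose]
  refine le_antisymm (l2_opNorm_map_star_le A) ?_
  simpa only [hinvol] using l2_opNorm_map_star_le (A.map star)

end L2OpNorm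

section FinTwo

variable {𝕜 : Type*} [RCLike 𝕜]

lemma mem_unitary_fin_two_rotation :
    (!![0, 1; -1, 0] : Matrix (Fin 2) (Fin 2) 𝕜) ∈ unitary _ := by
  rw [← unitaryGroup, mem_unitaryGroup_iff, star_eq_conjTranspose]
  ext i j
  fin_cases i <;> fin_cases j <;> simp [mul_apply, Fin.sum_univ_two]

lemma star_fin_two_rotation :
    star (!![0, 1; -1, 0] : Matrix (Fin 2) (Fin 2) 𝕜) = !![0, -1; 1, 0] := by
  rw [star_eq_conjTranspose]
  ext i j
  fin_cases i <;> fin_cases j <;> simp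

lemma adjugate_fin_two_eq_rotation_mul_transpose (A : Matrix (Fin 2) (Fin 2) 𝕜) :
    A.adjugate = !![0, 1; -1, 0] * Aᵀ * star !![0, 1; -1, 0] := by
  rw [adjugate_fin_two, star_fin_two_rotation]
  ext i j
  fin_cases i <;> fin_cases j <;> simp [mul_apply, vecMul, dotProduct, Fin.sum_univ_two]

lemma l2_opNorm_adjugate_fin_two (A : Matrix (Fin 2) (Fin 2) 𝕜) : ‖A.adjugate‖ = ‖A‖ := by
  have hJ := mem_unitary_fin_two_rotation (𝕜 := 𝕜)
  rw [adjugate_fin_two_eq_rotation_mul_transpose,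
    CStarRing.norm_mul_mem_unitary _ (Unitary.star_mem hJ),
    CStarRing.norm_mem_unitary_mul _ hJ, l2_opNorm_transpose]

lemma l2_opNorm_inv_of_det_eq_one {A : Matrix (Fin 2) (Fin 2) 𝕜} (h : A.det = 1) :
    ‖A⁻¹‖ = ‖A‖ := by
  rw [inv_def, h, Ring.inverse_one, one_smul, l2_opNorm_adjugate_fin_two]

end FinTwo

end Matrix

lemma Real.sqrt_le_max_of_le_mul {a b c : ℝ} (ha : 0 ≤ a) (hb : 0 ≤ b) (h : c ≤ a * b) :
    √c ≤ max a b := by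
  rw [Real.sqrt_le_left (ha.trans (le_max_left a b)), sq]
  exact h.trans (mul_le_mul (le_max_left a b) (le_max_right a b) hb (ha.trans (le_max_left a b)))

section OpNorm2

open scoped Matrix.Norms.L2Operator

lemma opNorm2_eq_norm (A : Matrix (Fin 2) (Fin 2) ℂ) : opNorm2 A = ‖A‖ := rfl

lemma measurable_opNorm2 : Measurable opNorm2 := by
  have : OpensMeasurableSpace (Matrix (Fin 2) (Fin 2) ℂ) :=
    (inferInstance : OpensMeasurableSpace (Fin 2 → Fin 2 → ℂ))
  exact continuous_norm.measurable

lemma det_prodUpTo {Ω : Type*} {B : ℕ → Ω → Matrix (Fin 2) (Fin 2) ℂ} {ω : Ω} {n : ℕ}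
    (hB : ∀ i, i < n → (B i ω).det = 1) : (prodUpTo B ω n).det = 1 := by
  induction n with
  | zero => simp [prodUpTo]
  | succ n ih =>
    rw [prodUpTo, Matrix.det_mul, hB n n.lt_succ_self,
      ih fun i hi => hB i (hi.trans n.lt_succ_self), one_mul]

lemma sqrt_le_iSup_opNorm2_prodUpTo {Ω : Type*} {B : ℕ → Ω → Matrix (Fin 2) (Fin 2) ℂ}
    {ω : Ω} {K j : ℕ} {r : ℝ} (hSL : ∀ i, i < K → (B i ω).det = 1) (hj : j < K)
    (hr : r ≤ opNorm2 (B j ω) ^ 2) :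
    √r ≤ ⨆ i : Fin (K + 1), opNorm2 (prodUpTo B ω i) ^ 2 := by
  set T := prodUpTo B ω j
  have hT : T.det = 1 := det_prodUpTo fun i hi => hSL i (hi.trans hj)
  have hquot : B j ω = prodUpTo B ω (j + 1) * T⁻¹ := by
    rw [prodUpTo, mul_assoc, Matrix.mul_nonsing_inv _ (by rw [hT]; exact isUnit_one), mul_one]
  have hnorm : opNorm2 (B j ω) ≤ opNorm2 (prodUpTo B ω (j + 1)) * opNorm2 T := by
    simp only [opNorm2_eq_norm]
    rw [hquot, ← Matrix.l2_opNorm_inv_of_det_eq_one hT]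
    exact Matrix.l2_opNorm_mul _ _
  have hle_iSup : ∀ i, i ≤ K → opNorm2 (prodUpTo B ω i) ^ 2 ≤
      ⨆ i : Fin (K + 1), opNorm2 (prodUpTo B ω i) ^ 2 := fun i hi =>
    le_ciSup (f := fun i : Fin (K + 1) => opNorm2 (prodUpTo B ω i) ^ 2)
      (Set.finite_range _).bddAbove (⟨i, Nat.lt_succ_of_le hi⟩ : Fin (K + 1))
  calc √r ≤ max (opNorm2 (prodUpTo B ω (j + 1)) ^ 2) (opNorm2 T ^ 2) := by
        refine Real.sqrt_le_max_of_le_mul (sq_nonneg _) (sq_nonneg _) ?_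
        rw [← mul_pow]
        exact hr.trans (pow_le_pow_left₀ (norm_nonneg _) hnorm 2)
    _ ≤ ⨆ i : Fin (K + 1), opNorm2 (prodUpTo B ω i) ^ 2 :=
        max_le (hle_iSup _ hj) (hle_iSup _ hj.le)

end OpNorm2

lemma le_probReal_iUnion_preimage {Ω ι : Type*} [Fintype ι] {β : ι → Type*}
    [∀ i, MeasurableSpace (β i)] [MeasurableSpace Ω] {P : Measure Ω} [IsProbabilityMeasure P]
    {X : ∀ i, Ω → β i} (hX : ∀ i, Measurable (X i)) (hindep : iIndepFun X P)
    {S : ∀ i, Set (β i)} (hS : ∀ i, MeasurableSet (S i)) {p : ℝ}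
    (hp : ∀ i, p ≤ P.real (X i ⁻¹' S i)) :
    1 - (1 - p) ^ Fintype.card ι ≤ P.real (⋃ i, X i ⁻¹' S i) := by
  have hA : ∀ i, MeasurableSet (X i ⁻¹' S i) := fun i => hX i (hS i)
  have hnone : P.real (⋂ i, (X i ⁻¹' S i)ᶜ) ≤ (1 - p) ^ Fintype.card ι := by
    rw [measureReal_def, hindep.meas_iInter (s := fun i => (X i ⁻¹' S i)ᶜ)
      fun i => ⟨(S i)ᶜ, (hS i).compl, rfl⟩, ENNReal.toReal_prod]
    calc ∏ i, (P (X i ⁻¹' S i)ᶜ).toReal ≤ ∏ _i : ι, (1 - p) := by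
          refine Finset.prod_le_prod (fun i _ => ENNReal.toReal_nonneg) fun i _ => ?_
          rw [← measureReal_def, probReal_compl_eq_one_sub (hA i)]
          linarith [hp i]
      _ = (1 - p) ^ Fintype.card ι := Finset.prod_const _
  rw [← compl_compl (⋃ i, _), Set.compl_iUnion,
    probReal_compl_eq_one_sub (MeasurableSet.iInter fun i => (hA i).compl)]
  linarith

theorem stmt9_general {Ω : Type*} [MeasurableSpace Ω] (P : Measure Ω) [IsProbabilityMeasure P]
    (K : ℕ) (B : ℕ → Ω → Matrix (Fin 2) (Fin 2) ℂ)
    (hmeas : ∀ j, j < K → Measurable (B j))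
    (hindep : iIndepFun (fun j : Fin K => B j) P)
    (hSL : ∀ j, j < K → ∀ ω, (B j ω).det = 1)
    (p₀ r : ℝ)
    (hp : ∀ j, j < K → p₀ ≤ (P {ω | r ≤ opNorm2 (B j ω) ^ 2}).toReal) :
    1 - (1 - p₀) ^ K ≤
      (P {ω | Real.sqrt r ≤ ⨆ j : Fin (K + 1), opNorm2 (prodUpTo B ω j) ^ 2}).toReal := by
  have hS : MeasurableSet {M | r ≤ opNorm2 M ^ 2} :=
    measurableSet_le measurable_const (measurable_opNorm2.pow_const 2)
  have hunion := le_probReal_iUnion_preimage (X := fun j : Fin K => B j)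
    (fun j => hmeas j j.2) hindep (fun _ => hS) (fun j => hp j j.2)
  rw [Fintype.card_fin] at hunion
  refine hunion.trans (measureReal_mono fun ω hω => ?_)
  obtain ⟨j, hj⟩ := Set.mem_iUnion.1 hω
  exact sqrt_le_iSup_opNorm2_prodUpTo (fun i hi => hSL i hi ω) j.2 hj

/-- if independent `SL(2,ℂ)`-valued random matrices `B_1,…,B_K` each satisfy
`P(‖B_j‖² ≥ r) ≥ p₀`, then the partial products satisfy
`P(max_{0≤j≤K} ‖T_j‖² ≥ r^{1/2}) ≥ 1 - (1-p₀)^K`. -/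
theorem stmt9 {Ω : Type*} [MeasurableSpace Ω] (P : Measure Ω) [IsProbabilityMeasure P]
    (K : ℕ) (B : ℕ → Ω → Matrix (Fin 2) (Fin 2) ℂ)
    (hmeas : ∀ j, j < K → Measurable (B j))
    (hindep : iIndepFun (fun j : Fin K => B j) P)
    (hSL : ∀ j, j < K → ∀ ω, (B j ω).det = 1)
    (p₀ r : ℝ) (hp₀ : 0 < p₀) (hp₀' : p₀ < 1) (hr : 1 ≤ r)
    (hp : ∀ j, j < K → p₀ ≤ (P {ω | r ≤ opNorm2 (B j ω) ^ 2}).toReal) :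
    1 - (1 - p₀) ^ K ≤
      (P {ω | Real.sqrt r ≤ ⨆ j : Fin (K + 1), opNorm2 (prodUpTo B ω j) ^ 2}).toReal :=
  stmt9_general P K B hmeas hindep hSL p₀ r hp

end
end

section
/- Let μ be a positive Borel measure on ℝ and E ∈ ℝ such that μ([E−ε, E+ε]) < Cε for all ε > 0. Then for every δ > 0 and every ε₀ > 0: ∫₀^{ε₀} Im B_μ(E + ε + iδ) dε < π² C ε₀. -/
/-!
For fixed `e`, the `ε`-integral of the Poisson kernel is at most `π` (a difference of
arctangents) and at most `ε₀ δ / (d² + δ²)` with `d = (|e - E| - ε₀)₊`. After Tonelli, the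
layer-cake formula writes the `μ`-integral of this majorant as `∫ μ {majorant > s} ds`. The
superlevel set at height `s` is empty for `s ≥ M := min π (ε₀ / δ)` and otherwise lies in
`[E - r, E + r]` with `r = ε₀ + √(ε₀ δ / s)`, so the hypothesis bounds the integral by
`C (ε₀ M + 2 √(ε₀ δ M)) ≤ (π + 2) C ε₀ < π² C ε₀`.
-/

open MeasureTheory Set Real

lemma ofReal_integral_le_lintegral_ofReal {α : Type*} [MeasurableSpace α] {μ : Measure α}
    {f : α → ℝ} (hf : 0 ≤ᵐ[μ] f) :
    ENNReal.ofReal (∫ x, f x ∂μ) ≤ ∫⁻ x, ENNReal.ofReal (f x) ∂μ :=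
  calc ENNReal.ofReal (∫ x, f x ∂μ) ≤ ‖∫ x, f x ∂μ‖ₑ := Real.ofReal_le_enorm _
    _ ≤ ∫⁻ x, ‖f x‖ₑ ∂μ := enorm_integral_le_lintegral_enorm _
    _ = ∫⁻ x, ENNReal.ofReal (f x) ∂μ :=
      lintegral_congr_ae (hf.mono fun _ hx => Real.enorm_eq_ofReal hx)

lemma lintegral_ofReal_le_of_meas_lt_le {α : Type*} [MeasurableSpace α] {μ : Measure α}
    {g : α → ℝ} {B : ℝ → ENNReal} {M : ℝ} (hg : AEMeasurable g μ) (hg_nonneg : 0 ≤ᵐ[μ] g)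
    (hg_le : ∀ x, g x ≤ M) (hB : ∀ s ∈ Ioo 0 M, μ {x | s < g x} ≤ B s) :
    ∫⁻ x, ENNReal.ofReal (g x) ∂μ ≤ ∫⁻ s in Ioo 0 M, B s := by
  have hempty : ∀ s ∈ Ici M, μ {x | s < g x} = 0 := fun s hs => by
    rw [eq_empty_of_forall_notMem (s := {x | s < g x})
      fun x hx => (hs.trans_lt hx).not_ge (hg_le x), measure_empty]
  calc ∫⁻ x, ENNReal.ofReal (g x) ∂μ = ∫⁻ s in Ioi 0, μ {x | s < g x} :=
        lintegral_eq_lintegral_meas_lt μ hg_nonneg hg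
    _ ≤ ∫⁻ s in Ioo 0 M ∪ Ici M, μ {x | s < g x} :=
        lintegral_mono_set fun s hs => (lt_or_ge s M).imp (⟨hs, ·⟩) id
    _ ≤ (∫⁻ s in Ioo 0 M, μ {x | s < g x}) + ∫⁻ s in Ici M, μ {x | s < g x} :=
        lintegral_union_le _ _ _
    _ = ∫⁻ s in Ioo 0 M, μ {x | s < g x} := by
        rw [setLIntegral_congr_fun measurableSet_Ici hempty, lintegral_zero, add_zero]
    _ ≤ ∫⁻ s in Ioo 0 M, B s := setLIntegral_mono' measurableSet_Ioo hB

lemma setLIntegral_Ioo_add_sqrt_div {a b M : ℝ} (ha : 0 ≤ a) (hb : 0 ≤ b) (hM : 0 ≤ M) :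
    ∫⁻ s in Ioo 0 M, ENNReal.ofReal (a + √(b / s)) = ENNReal.ofReal (a * M + 2 * √(b * M)) := by
  have hrpow : EqOn (fun s => a + √(b / s)) (fun s => a + √b * s ^ (-(1 / 2) : ℝ)) (Ioo 0 M) :=
    fun s hs => by
      dsimp only
      rw [sqrt_div' _ hs.1.le, rpow_neg hs.1.le, sqrt_eq_rpow s, div_eq_mul_inv]
  have hint : IntervalIntegrable (fun s => a + √b * s ^ (-(1 / 2) : ℝ)) volume 0 M :=
    intervalIntegrable_const.add
      ((intervalIntegral.intervalIntegrable_rpow' (by norm_num)).const_mul _)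
  rw [setLIntegral_congr_fun measurableSet_Ioo fun s hs => congrArg ENNReal.ofReal (hrpow hs),
    Measure.restrict_congr_set Ioo_ae_eq_Ioc, ← ofReal_integral_eq_lintegral_ofReal
      ((intervalIntegrable_iff_integrableOn_Ioc_of_le hM).1 hint)
      ((ae_restrict_iff' measurableSet_Ioc).2 (ae_of_all _ fun s hs =>
        add_nonneg ha (mul_nonneg (sqrt_nonneg _) (rpow_nonneg hs.1.le _)))),
    ← intervalIntegral.integral_of_le hM, intervalIntegral.integral_add intervalIntegrable_const
      ((intervalIntegral.intervalIntegrable_rpow' (by norm_num)).const_mul _),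
    intervalIntegral.integral_const_mul, integral_rpow (Or.inl (by norm_num)),
    intervalIntegral.integral_const, sqrt_mul hb, sqrt_eq_rpow M]
  norm_num
  congr 1
  ring

lemma intervalIntegral_poisson_eq_arctan_sub {δ : ℝ} (hδ : δ ≠ 0) (x a b : ℝ) :
    ∫ ε in a..b, δ / ((x - ε) ^ 2 + δ ^ 2) = arctan ((b - x) / δ) - arctan ((a - x) / δ) := by
  refine intervalIntegral.integral_eq_sub_of_hasDerivAt (f := fun ε => arctan ((ε - x) / δ))
    (fun ε _ => ?_) ?_
  · refine ((hasDerivAt_arctan _).comp ε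
      (((hasDerivAt_id' ε).sub_const x).div_const δ)).congr_deriv ?_
    field_simp
    ring
  · refine (continuous_const.div (by fun_prop) fun ε => ?_).intervalIntegrable _ _
    positivity

lemma intervalIntegral_poisson_lt_pi {δ : ℝ} (hδ : 0 < δ) (x a b : ℝ) :
    ∫ ε in a..b, δ / ((x - ε) ^ 2 + δ ^ 2) < π := by
  rw [intervalIntegral_poisson_eq_arctan_sub hδ.ne']
  linarith [arctan_lt_pi_div_two ((b - x) / δ), neg_pi_div_two_lt_arctan ((a - x) / δ)]

/-- A bound for `∫₀^{ε₀} δ / ((x - ε)² + δ²) dε`: the arctangent bound `π`, and `ε₀` times the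
largest value of the kernel, using `|x - ε| ≥ (|x| - ε₀)₊` for `ε ∈ (0, ε₀]`. -/
noncomputable def poissonMajorant (ε₀ δ x : ℝ) : ℝ :=
  min π (ε₀ * δ / (max (|x| - ε₀) 0 ^ 2 + δ ^ 2))

section poissonMajorant

variable {ε₀ δ : ℝ}

lemma poissonMajorant_nonneg (hε₀ : 0 ≤ ε₀) (hδ : 0 ≤ δ) (x : ℝ) : 0 ≤ poissonMajorant ε₀ δ x :=
  le_min pi_pos.le (by positivity)

lemma poissonMajorant_le (hε₀ : 0 ≤ ε₀) (hδ : 0 < δ) (x : ℝ) :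
    poissonMajorant ε₀ δ x ≤ min π (ε₀ / δ) :=
  min_le_min_left _ <| calc
    ε₀ * δ / (max (|x| - ε₀) 0 ^ 2 + δ ^ 2) ≤ ε₀ * δ / δ ^ 2 :=
      div_le_div_of_nonneg_left (by positivity) (by positivity)
        (le_add_of_nonneg_left (sq_nonneg _))
    _ = ε₀ / δ := by field_simp

lemma continuous_poissonMajorant (hδ : δ ≠ 0) : Continuous (poissonMajorant ε₀ δ) :=
  continuous_const.min (continuous_const.div (by fun_prop) fun x => by positivity)

lemma abs_lt_of_lt_poissonMajorant {x s : ℝ} (hδ : 0 < δ) (hs : 0 < s)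
    (h : s < poissonMajorant ε₀ δ x) : |x| < ε₀ + √(ε₀ * δ / s) := by
  set D := max (|x| - ε₀) 0
  have hD : D ^ 2 < ε₀ * δ / s := by
    have h' := h.trans_le (min_le_right _ _)
    rw [lt_div_iff₀ (by positivity)] at h'
    rw [lt_div_iff₀ hs]
    nlinarith
  linarith [le_max_left (|x| - ε₀) 0, (lt_sqrt (le_max_right _ _)).2 hD]

lemma setLIntegral_poisson_le_poissonMajorant (hε₀ : 0 ≤ ε₀) (hδ : 0 < δ) (x : ℝ) :
    ∫⁻ ε in Ioc 0 ε₀, ENNReal.ofReal (δ / ((x - ε) ^ 2 + δ ^ 2))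
      ≤ ENNReal.ofReal (poissonMajorant ε₀ δ x) := by
  rw [poissonMajorant, ENNReal.ofReal_min]
  refine le_min ?_ ?_
  · have hcont : Continuous fun ε => δ / ((x - ε) ^ 2 + δ ^ 2) :=
      continuous_const.div (by fun_prop) fun ε => by positivity
    rw [← ofReal_integral_eq_lintegral_ofReal hcont.integrableOn_Ioc
      (ae_of_all _ fun ε => by positivity), ← intervalIntegral.integral_of_le hε₀]
    exact ENNReal.ofReal_le_ofReal (intervalIntegral_poisson_lt_pi hδ x 0 ε₀).le
  · set D := max (|x| - ε₀) 0
    have hD : ∀ ε ∈ Ioc 0 ε₀, D ^ 2 ≤ (x - ε) ^ 2 := fun ε hε => by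
      rw [← sq_abs (x - ε)]
      exact pow_le_pow_left₀ (le_max_right _ _)
        (max_le (by linarith [abs_sub_abs_le_abs_sub x ε, abs_of_pos hε.1, hε.2])
          (abs_nonneg _)) 2
    calc ∫⁻ ε in Ioc 0 ε₀, ENNReal.ofReal (δ / ((x - ε) ^ 2 + δ ^ 2))
        ≤ ∫⁻ _ in Ioc 0 ε₀, ENNReal.ofReal (δ / (D ^ 2 + δ ^ 2)) :=
          setLIntegral_mono' measurableSet_Ioc fun ε hε => ENNReal.ofReal_le_ofReal <|
            div_le_div_of_nonneg_left hδ.le (by positivity) (by linarith [hD ε hε])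
      _ = ENNReal.ofReal (ε₀ * δ / (D ^ 2 + δ ^ 2)) := by
          rw [setLIntegral_const, Real.volume_Ioc, sub_zero, ← ENNReal.ofReal_mul (by positivity),
            mul_comm, mul_div_assoc]

end poissonMajorant

lemma ofReal_integral_poisson_le_lintegral_poissonMajorant (μ : Measure ℝ) [SFinite μ]
    {δ ε₀ : ℝ} (E : ℝ) (hδ : 0 < δ) (hε₀ : 0 ≤ ε₀) :
    ENNReal.ofReal (∫ ε in (0 : ℝ)..ε₀, ∫ e, δ / ((e - E - ε) ^ 2 + δ ^ 2) ∂μ)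
      ≤ ∫⁻ e, ENNReal.ofReal (poissonMajorant ε₀ δ (e - E)) ∂μ := by
  have hkernel :
      Measurable fun p : ℝ × ℝ => ENNReal.ofReal (δ / ((p.2 - E - p.1) ^ 2 + δ ^ 2)) :=
    ENNReal.measurable_ofReal.comp
      (continuous_const.div (by fun_prop) fun p => by positivity).measurable
  rw [intervalIntegral.integral_of_le hε₀]
  calc ENNReal.ofReal (∫ ε in Ioc 0 ε₀, ∫ e, δ / ((e - E - ε) ^ 2 + δ ^ 2) ∂μ)
      ≤ ∫⁻ ε in Ioc 0 ε₀, ENNReal.ofReal (∫ e, δ / ((e - E - ε) ^ 2 + δ ^ 2) ∂μ) :=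
        ofReal_integral_le_lintegral_ofReal <| ae_of_all _ fun ε =>
          integral_nonneg fun e => by positivity
    _ ≤ ∫⁻ ε in Ioc 0 ε₀, ∫⁻ e, ENNReal.ofReal (δ / ((e - E - ε) ^ 2 + δ ^ 2)) ∂μ :=
        lintegral_mono fun ε => ofReal_integral_le_lintegral_ofReal <| ae_of_all _ fun e => by
          positivity
    _ = ∫⁻ e, (∫⁻ ε in Ioc 0 ε₀, ENNReal.ofReal (δ / ((e - E - ε) ^ 2 + δ ^ 2))) ∂μ :=
        lintegral_lintegral_swap hkernel.aemeasurable
    _ ≤ ∫⁻ e, ENNReal.ofReal (poissonMajorant ε₀ δ (e - E)) ∂μ :=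
        lintegral_mono fun e => setLIntegral_poisson_le_poissonMajorant hε₀ hδ (e - E)

lemma lintegral_poissonMajorant_le {μ : Measure ℝ} {C E δ ε₀ : ℝ}
    (hμ : ∀ r, 0 < r → μ (Icc (E - r) (E + r)) ≤ ENNReal.ofReal (C * r))
    (hC : 0 ≤ C) (hδ : 0 < δ) (hε₀ : 0 < ε₀) :
    ∫⁻ e, ENNReal.ofReal (poissonMajorant ε₀ δ (e - E)) ∂μ
      ≤ ENNReal.ofReal ((π + 2) * C * ε₀) := by
  set M := min π (ε₀ / δ)
  have hM : 0 ≤ M := le_min pi_pos.le (by positivity)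
  have hsuperlevel : ∀ s ∈ Ioo 0 M, {e | s < poissonMajorant ε₀ δ (e - E)}
      ⊆ Icc (E - (ε₀ + √(ε₀ * δ / s))) (E + (ε₀ + √(ε₀ * δ / s))) := fun s hs e he => by
    rw [← mem_Icc_iff_abs_le, abs_sub_comm]
    exact (abs_lt_of_lt_poissonMajorant hδ hs.1 he).le
  have hδM : δ * M ≤ ε₀ := by
    calc δ * M ≤ δ * (ε₀ / δ) := by gcongr; exact min_le_right _ _
      _ = ε₀ := by field_simp
  calc ∫⁻ e, ENNReal.ofReal (poissonMajorant ε₀ δ (e - E)) ∂μ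
      ≤ ∫⁻ s in Ioo 0 M, ENNReal.ofReal (C * (ε₀ + √(ε₀ * δ / s))) :=
        lintegral_ofReal_le_of_meas_lt_le
          ((continuous_poissonMajorant hδ.ne').comp (continuous_sub_right E)).aemeasurable
          (ae_of_all _ fun e => poissonMajorant_nonneg hε₀.le hδ.le _)
          (fun e => poissonMajorant_le hε₀.le hδ _)
          fun s hs => (measure_mono (hsuperlevel s hs)).trans (hμ _ (by positivity [hs.1]))
    _ = ENNReal.ofReal C * ENNReal.ofReal (ε₀ * M + 2 * √(ε₀ * δ * M)) := by
        simp_rw [ENNReal.ofReal_mul hC]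
        rw [lintegral_const_mul' _ _ ENNReal.ofReal_ne_top,
          setLIntegral_Ioo_add_sqrt_div hε₀.le (by positivity) hM]
    _ ≤ ENNReal.ofReal C * ENNReal.ofReal ((π + 2) * ε₀) := by
        gcongr
        have : √(ε₀ * δ * M) ≤ ε₀ := sqrt_le_iff.2 ⟨hε₀.le, by nlinarith⟩
        nlinarith [min_le_left π (ε₀ / δ)]
    _ = ENNReal.ofReal ((π + 2) * C * ε₀) := by
        rw [← ENNReal.ofReal_mul hC]
        ring_nf

lemma isLocallyFiniteMeasure_of_Icc_lt_top {μ : Measure ℝ} {E : ℝ}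
    (hμ : ∀ r, 0 < r → μ (Icc (E - r) (E + r)) < ⊤) : IsLocallyFiniteMeasure μ :=
  ⟨fun x => ⟨Icc (E - (|x - E| + 1)) (E + (|x - E| + 1)),
    Icc_mem_nhds (by linarith [neg_abs_le (x - E)]) (by linarith [le_abs_self (x - E)]),
    hμ _ (by positivity)⟩⟩

/-- integrated bound on the Borel transform: if `μ([E-ε,E+ε]) < Cε` for
all `ε > 0`, then `∫₀^{ε₀} Im B_μ(E+ε+iδ) dε < π² C ε₀`. -/
theorem stmt13 (μ : Measure ℝ) (C E : ℝ)
    (hμ : ∀ ε : ℝ, 0 < ε → μ (Set.Icc (E - ε) (E + ε)) < ENNReal.ofReal (C * ε))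
    (δ : ℝ) (hδ : 0 < δ) (ε₀ : ℝ) (hε₀ : 0 < ε₀) :
    (∫ ε in (0:ℝ)..ε₀, ∫ e, δ / ((e - E - ε) ^ 2 + δ ^ 2) ∂μ)
      < Real.pi ^ 2 * C * ε₀ := by
  have hC : 0 < C := by simpa using pos_of_gt (hμ 1 one_pos)
  have := isLocallyFiniteMeasure_of_Icc_lt_top fun r hr => (hμ r hr).trans ENNReal.ofReal_lt_top
  have hbound := (ofReal_integral_poisson_le_lintegral_poissonMajorant μ E hδ hε₀.le).trans
    (lintegral_poissonMajorant_le (fun r hr => (hμ r hr).le) hC.le hδ hε₀)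
  calc (∫ ε in (0:ℝ)..ε₀, ∫ e, δ / ((e - E - ε) ^ 2 + δ ^ 2) ∂μ) ≤ (π + 2) * C * ε₀ :=
        (ENNReal.ofReal_le_ofReal_iff (by positivity)).1 hbound
    _ < π ^ 2 * C * ε₀ := by
        gcongr
        nlinarith [pi_gt_three]
end
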